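/- arXiv:1807.11187 — 7 statements merged into one kernel-verified Lean document; each statement's English description precedes it below -/
import Mathlib

section
/- Let N, m be positive integers, let σ be a permutation of {1,...,N}, let P be the N×N permutation matrix with P_{jk} = 1 if j = σ(k) and 0 otherwise, and let c_1,...,c_m ∈ ℂ^N satisfy Σ_{n=1}^m |c_n(i)|² = 1 for every i. Set K_n := P · diag(c_n). Then Σ_{n=1}^m K_n† K_n = I, and for every N×N complex matrix ρ, the matrix ρ' := Σ_{n=1}^m K_n ρ K_n† satisfies ρ'_{σ(i),σ(j)} = A_{ij} · ρ_{ij} for all i, j, where A_{ij} := Σ_{n=1}^m c_n(i) · conj(c_n(j)); moreover A is positive semidefinite and A_{ii} = 1 for all i. -/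
open Matrix Finset
open scoped ComplexOrder

/-! Each Kraus operator is `P * diagonal (c n)` with `P` unitary, so `P` cancels from
`∑ (K n)ᴴ * K n`, and conjugating by `P` in `∑ K n * ρ * (K n)ᴴ` only relabels entries by `σ`.
What remains, `∑ diagonal (c n) * ρ * (diagonal (c n))ᴴ`, is the Hadamard product of `ρ` with
`A = ∑ c n (c n)ᴴ`, a sum of rank-one positive semidefinite matrices with diagonal
`∑ |c n i|² = 1`. -/

namespace PEquiv

variable {m n α : Type*} [DecidableEq m] [DecidableEq n] [Semiring α] [StarRing α]

theorem conjTranspose_toMatrix (f : m ≃. n) :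
    (f.toMatrix : Matrix m n α)ᴴ = f.symm.toMatrix := by
  rw [toMatrix_symm]
  ext i j
  simp only [conjTranspose_apply, transpose_apply, toMatrix_apply]
  split_ifs <;> simp

theorem toMatrix_toPEquiv_mul_mul_conjTranspose [Fintype n] (σ : m ≃ n) (M : Matrix n n α) :
    (σ.toPEquiv.toMatrix : Matrix m n α) * M * (σ.toPEquiv.toMatrixᴴ : Matrix n m α) =
      M.submatrix σ σ := by
  rw [conjTranspose_toMatrix, ← Equiv.toPEquiv_symm, toMatrix_toPEquiv_mul,
    mul_toMatrix_toPEquiv, submatrix_submatrix, Equiv.symm_symm]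
  rfl

theorem conjTranspose_toMatrix_toPEquiv_mul_self [Fintype m] (σ : m ≃ n) :
    (σ.toPEquiv.toMatrixᴴ : Matrix n m α) * (σ.toPEquiv.toMatrix : Matrix m n α) = 1 := by
  rw [conjTranspose_toMatrix, ← toMatrix_trans, ← Equiv.toPEquiv_symm, ← Equiv.toPEquiv_trans,
    Equiv.symm_trans_self, Equiv.toPEquiv_refl, toMatrix_refl]

end PEquiv

section Kraus

variable {ι κ : Type*} [Fintype ι] [Fintype κ]

theorem sum_mul_mul_conjTranspose_left_mul {α : Type*} [Semiring α] [StarRing α]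
    (P : Matrix ι ι α) (D : κ → Matrix ι ι α) (ρ : Matrix ι ι α) :
    ∑ n, P * D n * ρ * (P * D n)ᴴ = P * (∑ n, D n * ρ * (D n)ᴴ) * Pᴴ := by
  simp only [conjTranspose_mul, Finset.mul_sum, Finset.sum_mul, Matrix.mul_assoc]

theorem sum_conjTranspose_mul_self_left_mul [DecidableEq ι] {α : Type*} [Semiring α]
    [StarRing α] {P : Matrix ι ι α} (hP : Pᴴ * P = 1) (D : κ → Matrix ι ι α) :
    ∑ n, (P * D n)ᴴ * (P * D n) = ∑ n, (D n)ᴴ * D n := by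
  simp only [conjTranspose_mul, Matrix.mul_assoc, ← Matrix.mul_assoc Pᴴ, hP, Matrix.one_mul]

theorem sum_diagonal_mul_mul_conjTranspose_diagonal [DecidableEq ι] {α : Type*} [CommSemiring α]
    [StarRing α] (c : κ → ι → α) (ρ : Matrix ι ι α) :
    ∑ n, diagonal (c n) * ρ * (diagonal (c n))ᴴ = (∑ n, vecMulVec (c n) (star (c n))) ⊙ ρ := by
  ext i j
  simp only [Matrix.sum_apply, diagonal_conjTranspose, diagonal_mul, mul_diagonal, hadamard_apply,
    vecMulVec_apply, Finset.sum_mul, Pi.star_apply]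
  exact Finset.sum_congr rfl fun n _ ↦ by ring

theorem sum_conjTranspose_diagonal_mul_diagonal [DecidableEq ι] {α : Type*} [Semiring α]
    [StarRing α] (c : κ → ι → α) :
    ∑ n, (diagonal (c n))ᴴ * diagonal (c n) = diagonal fun i ↦ ∑ n, star (c n i) * c n i := by
  simp only [diagonal_conjTranspose, diagonal_mul_diagonal, Pi.star_apply]
  rw [← Finset.sum_fn]
  exact (map_sum (diagonalAddMonoidHom ι α) _ _).symm

end Kraus

theorem RCLike.sum_mul_conj_eq_one {κ 𝕜 : Type*} [Fintype κ] [RCLike 𝕜] {c : κ → 𝕜}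
    (hc : ∑ n, ‖c n‖ ^ 2 = 1) : ∑ n, c n * starRingEnd 𝕜 (c n) = 1 := by
  simp only [RCLike.mul_conj]
  exact_mod_cast hc

theorem pGIO_structure_general (N m : ℕ)
    (σ : Equiv.Perm (Fin N))
    (P : Matrix (Fin N) (Fin N) ℂ)
    (hP : ∀ j k, P j k = if j = σ k then 1 else 0)
    (c : Fin m → Fin N → ℂ)
    (hc : ∀ i, ∑ n, ‖c n i‖ ^ 2 = 1)
    (K : Fin m → Matrix (Fin N) (Fin N) ℂ)
    (hK : ∀ n, K n = P * Matrix.diagonal (c n))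
    (A : Matrix (Fin N) (Fin N) ℂ)
    (hA : ∀ i j, A i j = ∑ n, c n i * (starRingEnd ℂ) (c n j)) :
    (∑ n, (K n)ᴴ * K n = 1) ∧
    (∀ ρ : Matrix (Fin N) (Fin N) ℂ, ∀ i j,
      (∑ n, K n * ρ * (K n)ᴴ) (σ i) (σ j) = A i j * ρ i j) ∧
    A.PosSemidef ∧ (∀ i, A i i = 1) := by
  obtain rfl : P = σ.symm.toPEquiv.toMatrix := by
    ext j k
    simp [hP, PEquiv.toMatrix_apply, Equiv.symm_apply_eq]
  obtain rfl : A = ∑ n, vecMulVec (c n) (star (c n)) := by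
    ext i j
    simp [hA, Matrix.sum_apply, vecMulVec_apply]
  obtain rfl : K = fun n ↦ σ.symm.toPEquiv.toMatrix * diagonal (c n) := funext hK
  have hnorm (i : Fin N) := RCLike.sum_mul_conj_eq_one (hc i)
  refine ⟨?_, fun ρ i j ↦ ?_, posSemidef_sum _ fun n _ ↦ posSemidef_vecMulVec_self_star _,
    fun i ↦ by simpa [Matrix.sum_apply, vecMulVec_apply] using hnorm i⟩
  · rw [sum_conjTranspose_mul_self_left_mul (PEquiv.conjTranspose_toMatrix_toPEquiv_mul_self _),
      sum_conjTranspose_diagonal_mul_diagonal, ← diagonal_one]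
    congr 1
    ext i
    simpa [mul_comm] using hnorm i
  · rw [sum_mul_mul_conjTranspose_left_mul, PEquiv.toMatrix_toPEquiv_mul_mul_conjTranspose,
      sum_diagonal_mul_mul_conjTranspose_diagonal]
    simp only [submatrix_apply, Equiv.symm_apply_apply, hadamard_apply]

/-- structural form of a pGIO. -/
theorem pGIO_structure (N m : ℕ) (hN : 0 < N) (hm : 0 < m)
    (σ : Equiv.Perm (Fin N))
    (P : Matrix (Fin N) (Fin N) ℂ)
    (hP : ∀ j k, P j k = if j = σ k then 1 else 0)
    (c : Fin m → Fin N → ℂ)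
    (hc : ∀ i, ∑ n, ‖c n i‖ ^ 2 = 1)
    (K : Fin m → Matrix (Fin N) (Fin N) ℂ)
    (hK : ∀ n, K n = P * Matrix.diagonal (c n))
    (A : Matrix (Fin N) (Fin N) ℂ)
    (hA : ∀ i j, A i j = ∑ n, c n i * (starRingEnd ℂ) (c n j)) :
    (∑ n, (K n)ᴴ * K n = 1) ∧
    (∀ ρ : Matrix (Fin N) (Fin N) ℂ, ∀ i j,
      (∑ n, K n * ρ * (K n)ᴴ) (σ i) (σ j) = A i j * ρ i j) ∧
    A.PosSemidef ∧ (∀ i, A i i = 1) :=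
  pGIO_structure_general N m σ P hP c hc K hK A hA
end

section
/- Let ρ and A be N×N complex matrices with |A_{ij}| ≤ 1 for all i, j, let σ be a permutation of {1,...,N}, and let ρ' be the matrix with entries ρ'_{ij} := A_{σ(i),σ(j)} · ρ_{σ(i),σ(j)}. Then perm(|ρ'|) ≤ perm(|ρ|), where |M| denotes the entrywise absolute value of M. -/
open Matrix Finset

/-- The permanent of the entrywise absolute value of a complex matrix. -/
noncomputable def permAbs {N : ℕ} (M : Matrix (Fin N) (Fin N) ℂ) : ℝ :=
  ∑ τ : Equiv.Perm (Fin N), ∏ i, ‖M i (τ i)‖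

namespace Matrix

variable {n R : Type*} [DecidableEq n] [Fintype n]

theorem permanent_submatrix_equiv_self [CommSemiring R] (σ : Equiv.Perm n) (M : Matrix n n R) :
    (M.submatrix σ σ).permanent = M.permanent := by
  change ((M.submatrix σ id).submatrix id σ).permanent = _
  rw [permanent_permute_rows, permanent_permute_cols]

theorem permanent_mono [CommSemiring R] [PartialOrder R] [IsOrderedRing R] {M M' : Matrix n n R}
    (h0 : ∀ i j, 0 ≤ M i j) (h : ∀ i j, M i j ≤ M' i j) : M.permanent ≤ M'.permanent :=
  sum_le_sum fun _ _ ↦ prod_le_prod (fun _ _ ↦ h0 _ _) fun _ _ ↦ h _ _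

end Matrix

theorem permAbs_eq_permanent {N : ℕ} (M : Matrix (Fin N) (Fin N) ℂ) :
    permAbs M = (M.map (‖·‖)).permanent := by
  rw [← permanent_transpose]
  rfl

theorem permAbs_le_permAbs_of_norm_le {N : ℕ} {M M' : Matrix (Fin N) (Fin N) ℂ}
    (h : ∀ i j, ‖M i j‖ ≤ ‖M' i j‖) : permAbs M ≤ permAbs M' := by
  rw [permAbs_eq_permanent, permAbs_eq_permanent]
  exact permanent_mono (fun i j ↦ norm_nonneg (M i j)) h

theorem permAbs_submatrix_equiv_self {N : ℕ} (σ : Equiv.Perm (Fin N))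
    (M : Matrix (Fin N) (Fin N) ℂ) : permAbs (M.submatrix σ σ) = permAbs M := by
  rw [permAbs_eq_permanent, permAbs_eq_permanent, ← submatrix_map, permanent_submatrix_equiv_self]

/-- perm(|ρ|) does not increase under a pGIO image. -/
theorem pGIO_permAbs_mono (N : ℕ)
    (ρ A : Matrix (Fin N) (Fin N) ℂ)
    (hA : ∀ i j, ‖A i j‖ ≤ 1)
    (σ : Equiv.Perm (Fin N))
    (ρ' : Matrix (Fin N) (Fin N) ℂ)
    (hρ' : ∀ i j, ρ' i j = A (σ i) (σ j) * ρ (σ i) (σ j)) :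
    permAbs ρ' ≤ permAbs ρ := by
  calc permAbs ρ' ≤ permAbs (ρ.submatrix σ σ) :=
        permAbs_le_permAbs_of_norm_le fun i j ↦ by
          rw [hρ', norm_mul]
          exact mul_le_of_le_one_left (norm_nonneg _) (hA _ _)
    _ = permAbs ρ := permAbs_submatrix_equiv_self σ ρ
end

section
/- Fix integers N ≥ 1 and a with 0 ≤ a ≤ N and a ≠ 1, and for an N×N complex matrix ρ define J_a(ρ) as the maximum over all permutations σ of {1,...,N} having exactly N − a fixed points of the quantity ∏_{i=1}^N |ρ_{i,σ(i)}|. Let A be an N×N complex matrix with |A_{ij}| ≤ 1 for all i, j, let π be a permutation of {1,...,N}, and let ρ' be the matrix with entries ρ'_{ij} := A_{π(i),π(j)} · ρ_{π(i),π(j)}. Then J_a(ρ') ≤ J_a(ρ). -/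
/-!
A permutation `σ` contributing to `J_a(ρ')` is matched by its conjugate `π σ π⁻¹`, which has the
same number of fixed points; since `|A| ≤ 1`, its product for `ρ` dominates that of `σ` for `ρ'`.
As all products are nonnegative, `J_a(ρ) ≥ 0 = sSup ∅` also covers the case of no such `σ`.
-/

open Matrix Finset

/-- `J N a ρ` : the supremum (in fact maximum) over all permutations `σ` of `Fin N`
with exactly `N - a` fixed points of `∏ i, |ρ i (σ i)|`. -/
noncomputable def J (N a : ℕ) (ρ : Matrix (Fin N) (Fin N) ℂ) : ℝ :=
  sSup {x : ℝ | ∃ σ : Equiv.Perm (Fin N),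
    (Finset.univ.filter fun i => σ i = i).card = N - a ∧
    x = ∏ i, ‖ρ i (σ i)‖}

section Conjugation

variable {α : Type*} [Fintype α]

lemma card_fixed_conj [DecidableEq α] (π σ : Equiv.Perm α) :
    #{i | (π * σ * π⁻¹) i = i} = #{i | σ i = i} :=
  Finset.card_equiv π.symm fun i => by
    simp [Equiv.Perm.mul_apply, ← Equiv.eq_symm_apply]

lemma prod_conj_apply {M : Type*} [CommMonoid M] (f : α → α → M) (π σ : Equiv.Perm α) :
    ∏ i, f (π i) (π (σ i)) = ∏ i, f i ((π * σ * π⁻¹) i) := by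
  rw [← Equiv.prod_comp π (fun j => f j ((π * σ * π⁻¹) j))]
  simp [Equiv.Perm.mul_apply]

end Conjugation

section SupOverPerms

variable {N a : ℕ} (ρ : Matrix (Fin N) (Fin N) ℂ)

lemma J_nonneg : 0 ≤ J N a ρ :=
  Real.sSup_nonneg fun _ ⟨_, _, hx⟩ => hx ▸ by positivity

lemma prod_le_J {σ : Equiv.Perm (Fin N)} (hσ : #{i | σ i = i} = N - a) :
    ∏ i, ‖ρ i (σ i)‖ ≤ J N a ρ := by
  refine le_csSup ?_ ⟨σ, hσ, rfl⟩
  refine (Set.finite_range fun τ : Equiv.Perm (Fin N) => ∏ i, ‖ρ i (τ i)‖).subset ?_ |>.bddAbove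
  rintro _ ⟨τ, -, rfl⟩
  exact ⟨τ, rfl⟩

end SupOverPerms

theorem pGIO_J_mono_general (N a : ℕ)
    (ρ A : Matrix (Fin N) (Fin N) ℂ)
    (hA : ∀ i j, ‖A i j‖ ≤ 1)
    (π : Equiv.Perm (Fin N))
    (ρ' : Matrix (Fin N) (Fin N) ℂ)
    (hρ' : ∀ i j, ρ' i j = A (π i) (π j) * ρ (π i) (π j)) :
    J N a ρ' ≤ J N a ρ := by
  refine Real.sSup_le ?_ (J_nonneg ρ)
  rintro _ ⟨σ, hσ, rfl⟩
  calc ∏ i, ‖ρ' i (σ i)‖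
      ≤ ∏ i, ‖ρ (π i) (π (σ i))‖ :=
        prod_le_prod (fun _ _ => norm_nonneg _) fun i _ => by
          rw [hρ', norm_mul]
          exact mul_le_of_le_one_left (norm_nonneg _) (hA _ _)
    _ = ∏ i, ‖ρ i ((π * σ * π⁻¹) i)‖ := prod_conj_apply (fun x y => ‖ρ x y‖) π σ
    _ ≤ J N a ρ := prod_le_J ρ (by rw [card_fixed_conj, hσ])

/-- the monotone `J_a` does not increase under a pGIO image. -/
theorem pGIO_J_mono (N a : ℕ) (hN : 1 ≤ N) (ha : a ≤ N) (ha1 : a ≠ 1)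
    (ρ A : Matrix (Fin N) (Fin N) ℂ)
    (hA : ∀ i j, ‖A i j‖ ≤ 1)
    (π : Equiv.Perm (Fin N))
    (ρ' : Matrix (Fin N) (Fin N) ℂ)
    (hρ' : ∀ i j, ρ' i j = A (π i) (π j) * ρ (π i) (π j)) :
    J N a ρ' ≤ J N a ρ :=
  pGIO_J_mono_general N a ρ A hA π ρ' hρ'
end

section
/- For all N×N complex matrices V and S, the following identity holds: Σ_{α,ρ ∈ S_N} ∏_{j=1}^N V_{α(j),j} · conj(V_{ρ(j),j}) · S_{ρ(j),α(j)} = Σ_{π ∈ S_N} (∏_{i=1}^N S_{i,π(i)}) · perm(V_π ∘ conj(V)), where (V_π)_{r,j} := V_{π(r),j} is V with rows permuted by π, conj(V) is the entrywise complex conjugate, and ∘ is the entrywise (Hadamard) product. -/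
open Matrix Finset

/-- The permanent of a complex square matrix. -/
noncomputable def perm {N : ℕ} (M : Matrix (Fin N) (Fin N) ℂ) : ℂ :=
  ∑ τ : Equiv.Perm (Fin N), ∏ i, M i (τ i)

/-- The partially distinguishable boson-sampling transition probability. -/
noncomputable def P {N : ℕ} (V S : Matrix (Fin N) (Fin N) ℂ) : ℂ :=
  ∑ α : Equiv.Perm (Fin N), ∑ ρ : Equiv.Perm (Fin N),
    ∏ j, V (α j) j * (starRingEnd ℂ) (V (ρ j) j) * S (ρ j) (α j)

/-!
Substitute `π = α * ρ⁻¹` and `τ = ρ⁻¹` in the double sum over `(α, ρ)`; this is a bijection of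
`S_N × S_N`. Reindexing the product over `j` by `i = ρ j` turns the `(α, ρ)` summand into
`(∏ i, S i (π i)) * ∏ i, V (π i) (τ i) * conj (V i (τ i))`, and the sum over `τ` of the second
factor is the permanent of the Hadamard product `V_π ∘ conj V`.
-/

theorem Fintype.sum_sum_comp_mul_inv {G M : Type*} [Group G] [Fintype G] [AddCommMonoid M]
    (f : G → G → M) : ∑ a, ∑ b, f (a * b⁻¹) b⁻¹ = ∑ p, ∑ q, f p q := calc
  _ = ∑ b : G, ∑ p, f p b⁻¹ := by
    rw [Finset.sum_comm]
    exact Finset.sum_congr rfl fun b _ => Equiv.sum_comp (Equiv.mulRight b⁻¹) (fun a => f a b⁻¹)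
  _ = ∑ p, ∑ q, f p q := by
    rw [Finset.sum_comm]
    exact Finset.sum_congr rfl fun p _ => Equiv.sum_comp (Equiv.inv G) (f p)

theorem Equiv.Perm.prod_eq_prod_comp_mul_inv {ι R : Type*} [Fintype ι] [CommMonoid R]
    (A B C : ι → ι → R) (α ρ : Equiv.Perm ι) :
    ∏ j, A (α j) j * B (ρ j) j * C (ρ j) (α j) =
      (∏ i, C i ((α * ρ⁻¹) i)) * ∏ i, A ((α * ρ⁻¹) i) (ρ⁻¹ i) * B i (ρ⁻¹ i) := by
  rw [← prod_mul_distrib]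
  conv_rhs => rw [← Equiv.prod_comp ρ]
  simp only [Perm.mul_apply, Perm.coe_inv, symm_apply_apply]
  exact prod_congr rfl fun j _ => mul_comm _ _

/-- the transition probability as a sum of permanents of
row-permuted Hadamard products. -/
theorem transition_prob_perm_expansion (N : ℕ) (V S : Matrix (Fin N) (Fin N) ℂ) :
    P V S = ∑ π : Equiv.Perm (Fin N),
      (∏ i, S i (π i)) *
        perm (Matrix.of fun r j => V (π r) j * (starRingEnd ℂ) (V r j)) := by
  simp only [P, perm, of_apply, mul_sum]
  refine .trans ?_ (Fintype.sum_sum_comp_mul_inv _)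
  exact sum_congr rfl fun α _ => sum_congr rfl fun ρ _ =>
    Equiv.Perm.prod_eq_prod_comp_mul_inv V (fun r j => starRingEnd ℂ (V r j)) S α ρ
end

section
/- For all N×N complex matrices V and S, the following Ryser-type inclusion–exclusion identity holds: Σ_{α,ρ ∈ S_N} ∏_{j=1}^N V_{α(j),j} · conj(V_{ρ(j),j}) · S_{ρ(j),α(j)} = Σ_{R,T ⊆ {1,...,N}} (−1)^{|R|+|T|} · ∏_{j=1}^N ( Σ_{r ∈ R} Σ_{s ∈ T} V_{s,j} · conj(V_{r,j}) · S_{r,s} ), where the outer sum runs over all pairs of subsets R, T of {1,...,N} and |R| denotes the cardinality of R. -/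
/-!
Expanding the product, the right-hand side becomes a sum over pairs of maps `f, g : Fin N → Fin N`
(the indices `r`, `s` chosen in each column `j`), the pair `(f, g)` weighted by
`(∑_{R ⊇ range f} (-1)^|R|) · (∑_{T ⊇ range g} (-1)^|T|)`. An alternating sum over the supersets of
a set vanishes unless that set is everything, so only pairs of surjective, i.e. bijective, maps
survive, each with sign `(-1)^(2N) = 1`: these are exactly the pairs of permutations in `P`.
-/

open Matrix Finset

open Fintype (piFinset)
open Function

namespace Finset

variable {α : Type*} [Fintype α] [DecidableEq α] {R : Type*} [CommRing R]

theorem sum_superset_neg_one_pow_card (s : Finset α) :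
    ∑ U with s ⊆ U, (-1 : R) ^ #U = if s = univ then (-1) ^ Fintype.card α else 0 := by
  calc ∑ U with s ⊆ U, (-1 : R) ^ #U
      = ∑ U, (∏ _ ∈ U, (-1 : R)) * ∏ a ∈ univ \ U, if a ∉ s then 1 else 0 := by
        rw [sum_filter]
        refine sum_congr rfl fun U _ ↦ ?_
        rw [prod_boole, prod_const, mul_ite, mul_one, mul_zero]
        congr 1
        simp only [subset_iff, mem_sdiff, mem_univ, true_and, not_imp_not]
    _ = ∏ a, (-1 + if a ∉ s then 1 else 0) := by rw [prod_add, powerset_univ]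
    _ = if s = univ then (-1) ^ Fintype.card α else 0 := by
        split_ifs with hs
        · simp [hs]
        · obtain ⟨a, ha⟩ := not_forall.mp (eq_univ_iff_forall.not.mp hs)
          exact prod_eq_zero (mem_univ a) (by simp [ha])

theorem image_univ_eq_univ_iff {ι : Type*} [Fintype ι] {f : ι → α} :
    univ.image f = univ ↔ Surjective f := by
  simp [eq_univ_iff_forall, Surjective]

theorem sum_neg_one_pow_card_mul_sum_piFinset {ι : Type*} [Fintype ι] [DecidableEq ι]
    (g : (ι → α) → R) :
    ∑ U : Finset α, (-1) ^ #U * ∑ f ∈ piFinset fun _ ↦ U, g f =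
      (-1) ^ Fintype.card α * ∑ f with Surjective f, g f := by
  calc ∑ U : Finset α, (-1) ^ #U * ∑ f ∈ piFinset fun _ ↦ U, g f
      = ∑ U : Finset α, ∑ f, if univ.image f ⊆ U then (-1) ^ #U * g f else 0 := by
        refine sum_congr rfl fun U _ ↦ ?_
        rw [mul_sum, ← sum_filter]
        congr 1
        ext f
        simp [image_subset_iff]
    _ = ∑ f, g f * ∑ U with univ.image f ⊆ U, (-1) ^ #U := by
        rw [sum_comm]
        refine sum_congr rfl fun f _ ↦ ?_
        rw [sum_filter, mul_sum]
        refine sum_congr rfl fun U _ ↦ ?_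
        split_ifs <;> ring
    _ = (-1) ^ Fintype.card α * ∑ f with Surjective f, g f := by
        simp only [sum_superset_neg_one_pow_card, image_univ_eq_univ_iff, mul_ite, mul_zero,
          ← sum_filter, mul_sum, mul_comm]

theorem sum_neg_one_pow_card_mul_prod_sum_sum {β ι : Type*} [Fintype β] [DecidableEq β]
    [Fintype ι] [DecidableEq ι] (A : α → β → ι → R) :
    ∑ U : Finset α, ∑ W : Finset β, (-1) ^ (#U + #W) * ∏ j, ∑ r ∈ U, ∑ s ∈ W, A r s j =
      (-1) ^ (Fintype.card α + Fintype.card β) *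
        ∑ f : ι → α with Surjective f, ∑ g : ι → β with Surjective g, ∏ j, A (f j) (g j) j := by
  calc ∑ U : Finset α, ∑ W : Finset β, (-1) ^ (#U + #W) * ∏ j, ∑ r ∈ U, ∑ s ∈ W, A r s j
      = ∑ U : Finset α, (-1) ^ #U * ∑ f ∈ piFinset fun _ ↦ U,
          ∑ W : Finset β, (-1) ^ #W * ∑ g ∈ piFinset fun _ ↦ W, ∏ j, A (f j) (g j) j := by
        refine sum_congr rfl fun U _ ↦ ?_
        simp only [pow_add, prod_univ_sum, mul_sum, mul_assoc]
        exact sum_comm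
    _ = (-1) ^ (Fintype.card α + Fintype.card β) *
        ∑ f : ι → α with Surjective f, ∑ g : ι → β with Surjective g, ∏ j, A (f j) (g j) j := by
        simp only [sum_neg_one_pow_card_mul_sum_piFinset, ← mul_sum,
          mul_left_comm _ ((-1 : R) ^ Fintype.card β)]
        ring

theorem sum_surjective_eq_sum_perm {M : Type*} [AddCommMonoid M] (h : (α → α) → M) :
    ∑ f : α → α with Surjective f, h f = ∑ σ : Equiv.Perm α, h σ := by
  have hsurj : ({f | Surjective f} : Finset (α → α)) = univ.image fun σ : Equiv.Perm α ↦ ⇑σ := by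
    ext f
    simp only [mem_filter, mem_univ, true_and, mem_image]
    exact ⟨fun hf ↦ ⟨Equiv.ofBijective f (Finite.surjective_iff_bijective.mp hf), rfl⟩,
      fun ⟨σ, hσ⟩ ↦ hσ ▸ σ.surjective⟩
  rw [hsurj, sum_image fun σ _ τ _ h ↦ DFunLike.coe_injective h]

end Finset

/-- Ryser-type inclusion–exclusion formula for the transition probability. -/
theorem transition_prob_ryser (N : ℕ) (V S : Matrix (Fin N) (Fin N) ℂ) :
    P V S = ∑ R : Finset (Fin N), ∑ T : Finset (Fin N),
      (-1 : ℂ) ^ (R.card + T.card) *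
        ∏ j, (∑ r ∈ R, ∑ s ∈ T, V s j * (starRingEnd ℂ) (V r j) * S r s) := by
  rw [sum_neg_one_pow_card_mul_prod_sum_sum fun r s j ↦ V s j * (starRingEnd ℂ) (V r j) * S r s]
  simp only [sum_surjective_eq_sum_perm, Fintype.card_fin, Even.neg_one_pow ⟨N, rfl⟩, one_mul]
  exact sum_comm
end

section
/- Let V be an N×N complex matrix and let S be an N×N complex positive semidefinite matrix. Then the quantity P(V,S) := Σ_{α,ρ ∈ S_N} ∏_{j=1}^N V_{α(j),j} · conj(V_{ρ(j),j}) · S_{ρ(j),α(j)} is a nonnegative real number. -/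
open Matrix Finset
open scoped ComplexOrder

namespace Matrix

variable {𝕜 ι n : Type*} [RCLike 𝕜]

theorem posSemidef_of_one : (of fun _ _ : n => (1 : 𝕜)).PosSemidef := by
  refine ⟨by ext; simp, fun x => ?_⟩
  simpa [Finsupp.sum, sum_mul_sum] using star_mul_self_nonneg (x.sum fun _ xi => xi)

theorem posSemidef_hadamard_prod {A : ι → Matrix n n 𝕜} (s : Finset ι)
    (hA : ∀ i ∈ s, (A i).PosSemidef) : (of fun x y => ∏ i ∈ s, A i x y).PosSemidef := by
  classical
  induction s using Finset.induction_on with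
  | empty => simpa using posSemidef_of_one
  | insert i s hi ih =>
    have hprod : (of fun x y => ∏ k ∈ insert i s, A k x y) =
        A i ⊙ of fun x y => ∏ k ∈ s, A k x y := by
      ext x y
      simp [prod_insert hi]
    rw [hprod]
    exact (hA i (mem_insert_self i s)).hadamard (ih fun k hk => hA k (mem_insert_of_mem hk))

end Matrix

theorem P_eq_star_dotProduct_mulVec {N : ℕ} (V S : Matrix (Fin N) (Fin N) ℂ) :
    P V S = star (fun α : Equiv.Perm (Fin N) => ∏ j, V (α j) j) ⬝ᵥ
      (of (fun ρ α : Equiv.Perm (Fin N) => ∏ j, S (ρ j) (α j)) *ᵥ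
        fun α => ∏ j, V (α j) j) := by
  rw [P, Finset.sum_comm]
  simp only [dotProduct, mulVec, Pi.star_apply, star_prod, of_apply, mul_sum]
  refine sum_congr rfl fun ρ _ => sum_congr rfl fun α _ => ?_
  simp only [prod_mul_distrib, Complex.star_def]
  ring

/-- for positive semidefinite `S`, the transition probability is a
nonnegative real number (i.e. nonnegative in the complex order, which forces it
to be real with nonnegative real part). -/
theorem transition_prob_nonneg (N : ℕ) (V S : Matrix (Fin N) (Fin N) ℂ)
    (hS : S.PosSemidef) :
    0 ≤ P V S := by
  rw [P_eq_star_dotProduct_mulVec]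
  exact (posSemidef_hadamard_prod univ fun j _ =>
    hS.submatrix fun σ : Equiv.Perm (Fin N) => σ j).dotProduct_mulVec_nonneg _
end

section
/- Let V be an N×N complex matrix and π a permutation of {1,...,N}, and let V_π be the row-permuted matrix (V_π)_{r,j} := V_{π(r),j}. Then |perm(V_π ∘ conj(V))| ≤ perm(V ∘ conj(V)), where conj(V) is the entrywise complex conjugate and ∘ is the entrywise (Hadamard) product, so that the right-hand side is the permanent of the nonnegative matrix with entries |V_{ij}|². -/
/-!
For each permutation `τ`, the `τ`-term of the left-hand side has modulus `x_τ y_τ`, where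
`x_τ = ∏ r, |V (π r) (τ r)|` and `y_τ = ∏ r, |V r (τ r)|`. Since `2 x_τ y_τ ≤ x_τ² + y_τ²`, the
left-hand side is at most the mean of `∑ τ, x_τ²` and `∑ τ, y_τ²`, and both sums equal
`perm |V|²` because permuting the rows of a matrix does not change its permanent.
-/

open Matrix Finset

/-- The permanent of a real square matrix. -/
def permR {N : ℕ} (M : Matrix (Fin N) (Fin N) ℝ) : ℝ :=
  ∑ τ : Equiv.Perm (Fin N), ∏ i, M i (τ i)

namespace Matrix

variable {n R : Type*} [DecidableEq n] [Fintype n]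

theorem norm_permanent_le [NormedCommRing R] [NormOneClass R] (M : Matrix n n R) :
    ‖M.permanent‖ ≤ (M.map norm).permanent :=
  (norm_sum_le _ _).trans <| sum_le_sum fun _ _ => norm_prod_le _ _

section OrderedRing

variable [CommRing R] [LinearOrder R] [IsStrictOrderedRing R]

theorem two_mul_permanent_hadamard_le (A B : Matrix n n R) :
    2 * (A ⊙ B).permanent ≤ (A ⊙ A).permanent + (B ⊙ B).permanent := by
  simp only [permanent, hadamard_apply, prod_mul_distrib, mul_sum, ← sum_add_distrib]
  exact sum_le_sum fun σ _ => by
    simpa only [mul_assoc, sq] using two_mul_le_add_sq (∏ i, A (σ i) i) (∏ i, B (σ i) i)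

theorem permanent_hadamard_submatrix_le (π : Equiv.Perm n) (A : Matrix n n R) :
    (A.submatrix π id ⊙ A).permanent ≤ (A ⊙ A).permanent := by
  have h := two_mul_permanent_hadamard_le (A.submatrix π id) A
  rw [← submatrix_hadamard, permanent_permute_cols] at h
  linarith

end OrderedRing

end Matrix

theorem perm_eq_permanent {N : ℕ} (M : Matrix (Fin N) (Fin N) ℂ) : perm M = M.permanent := by
  rw [← permanent_transpose]
  rfl

theorem permR_eq_permanent {N : ℕ} (M : Matrix (Fin N) (Fin N) ℝ) : permR M = M.permanent := by
  rw [← permanent_transpose]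
  rfl

/-- `|perm(V_π ∘ conj V)| ≤ perm(V ∘ conj V)`, where `V_π` is the
row-permuted matrix and the right-hand side is the permanent of the nonnegative
matrix with entries `|V i j|²`. -/
theorem abs_perm_row_permuted_le (N : ℕ) (V : Matrix (Fin N) (Fin N) ℂ)
    (π : Equiv.Perm (Fin N)) :
    ‖perm (Matrix.of fun r j => V (π r) j * (starRingEnd ℂ) (V r j))‖ ≤
      permR (Matrix.of fun i j => ‖V i j‖ ^ 2) := by
  set W : Matrix (Fin N) (Fin N) ℝ := V.map norm
  have h_norm : (Matrix.of fun r j => V (π r) j * (starRingEnd ℂ) (V r j)).map norm =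
      W.submatrix π id ⊙ W := by
    ext r j
    simp [W]
  have h_sq : (Matrix.of fun i j => ‖V i j‖ ^ 2) = W ⊙ W := by
    ext i j
    simp [W, sq]
  rw [perm_eq_permanent, permR_eq_permanent, h_sq]
  calc _ ≤ (W.submatrix π id ⊙ W).permanent := h_norm ▸ norm_permanent_le _
    _ ≤ (W ⊙ W).permanent := permanent_hadamard_submatrix_le π W
end
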